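/- arXiv:2407.08430 — 3 statements merged into one kernel-verified Lean document; each statement's English description precedes it below -/
import Mathlib

section
/- Let p be a prime, let Λ = ℤ_p[[X]] be the ring of formal power series over the p-adic integers, let G be a cyclic group of order p, and let Λ[G] be the group ring. Let M be a finitely generated Λ[G]-module that is free of finite rank n as a Λ-module. Let J ⊆ Λ[G] be the ideal generated by X and by the elements g − 1 for all g ∈ G, and assume the coinvariant module M/JM is a free ℤ_p-module of rank r satisfying r · p = n. Then M is a free Λ[G]-module (of rank r). -/
open PowerSeries

/-- The ideal `J ⊆ Λ[G]` (with `Λ = ℤ_p[[X]]`) generated by `X` and the elements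
`g - 1` for all `g ∈ G`. -/
noncomputable def coinvariantsIdeal (p : ℕ) [Fact p.Prime] (G : Type) [Group G] :
    Ideal (MonoidAlgebra (PowerSeries ℤ_[p]) G) :=
  Ideal.span
    ({algebraMap (PowerSeries ℤ_[p]) (MonoidAlgebra (PowerSeries ℤ_[p]) G) PowerSeries.X} ∪
      Set.range fun g : G => MonoidAlgebra.of (PowerSeries ℤ_[p]) G g - 1)

/-!
The ring `Λ = ℤ_p[[X]]` is local and `Λ[G]` is finite over it, so every maximal ideal of `Λ[G]`
lies over the maximal ideal `(p, X)` of `Λ`; hence `X` and `p` lie in the Jacobson radical of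
`Λ[G]`, and so does `g - 1`, because `(g - 1)^p ≡ g^p - 1 = 0` modulo `p` and the Jacobson radical
is a radical ideal. By Nakayama, lifts of a `ℤ_p`-basis of `M/JM` then generate `M` over `Λ[G]`,
giving a surjection `Λ[G]^r → M`. Both sides are free `Λ`-modules of rank `rp = n`, and a
surjection between free modules of the same finite rank over a commutative ring is injective.
-/

open IsLocalRing

theorem PowerSeries.mem_maximalIdeal_iff {R : Type*} [CommRing R] [IsLocalRing R] {f : R⟦X⟧} :
    f ∈ maximalIdeal R⟦X⟧ ↔ constantCoeff f ∈ maximalIdeal R := by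
  simp only [mem_maximalIdeal, mem_nonunits_iff, isUnit_iff_constantCoeff]

theorem IsLocalRing.map_maximalIdeal_le_jacobson_bot (R A : Type*) [CommRing R] [IsLocalRing R]
    [CommRing A] [Algebra R A] [Algebra.IsIntegral R A] :
    (maximalIdeal R).map (algebraMap R A) ≤ (⊥ : Ideal A).jacobson := by
  rw [Ideal.map_le_iff_le_comap, Ideal.jacobson, Ideal.comap_sInf', le_iInf₂_iff]
  rintro _ ⟨m, ⟨-, hm⟩, rfl⟩
  exact (eq_maximalIdeal (Ideal.isMaximal_comap_of_isIntegral_of_isMaximal m)).ge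

theorem Ideal.IsRadical.sub_one_mem_of_pow_eq_one {A : Type*} [CommRing A] {I : Ideal A}
    (hI : I.IsRadical) {p : ℕ} (hp : p.Prime) (hpI : (p : A) ∈ I) {x : A} (hx : x ^ p = 1) :
    x - 1 ∈ I := by
  obtain ⟨c, hc⟩ := exists_add_pow_prime_eq hp (x - 1) 1
  have hpow : (x - 1) ^ p = -(p * (x - 1) * 1 * c) := by
    rw [sub_add_cancel, hx, one_pow] at hc
    linear_combination -hc
  refine hI ⟨p, hpow ▸ I.neg_mem_iff.2 ?_⟩
  exact I.mul_mem_right c (I.mul_mem_right _ (I.mul_mem_right _ hpI))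

theorem coinvariantsIdeal_le_jacobson_bot (p : ℕ) [Fact p.Prime] (G : Type) [CommGroup G]
    [Finite G] (hG : ∀ g : G, g ^ p = 1) :
    coinvariantsIdeal p G ≤ (⊥ : Ideal (MonoidAlgebra ℤ_[p]⟦X⟧ G)).jacobson := by
  have hmax := map_maximalIdeal_le_jacobson_bot ℤ_[p]⟦X⟧ (MonoidAlgebra ℤ_[p]⟦X⟧ G)
  have hp : (p : ℤ_[p]⟦X⟧) ∈ maximalIdeal _ := by
    rw [mem_maximalIdeal_iff, map_natCast]
    exact PadicInt.p_nonunit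
  rw [coinvariantsIdeal, Ideal.span_le]
  rintro _ (rfl | ⟨g, rfl⟩)
  · refine hmax (Ideal.mem_map_of_mem _ ?_)
    rw [mem_maximalIdeal_iff, constantCoeff_X]
    exact zero_mem _
  · refine (Ideal.isRadical_jacobson ⊥).sub_one_mem_of_pow_eq_one (Fact.out : p.Prime) ?_ ?_
    · simpa using hmax (Ideal.mem_map_of_mem _ hp)
    · rw [← map_pow, hG, map_one]

theorem LinearMap.injective_of_surjective_of_finrank_eq {R M N : Type*} [CommRing R]
    [Nontrivial R] [AddCommGroup M] [Module R M] [Module.Free R M] [Module.Finite R M]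
    [AddCommGroup N] [Module R N] [Module.Free R N] [Module.Finite R N]
    (f : M →ₗ[R] N) (hf : Function.Surjective f) (h : Module.finrank R M = Module.finrank R N) :
    Function.Injective f :=
  OrzechProperty.injective_of_surjective_of_injective (LinearEquiv.ofFinrankEq M N h).toLinearMap
    f (LinearEquiv.injective _) hf

theorem Fintype.surjective_linearCombination_of_span_mkQ {S A M ι : Type*} [Semiring S]
    [CommRing A] [AddCommGroup M] [Module A M] [Module.Finite A M] [Module S M] [SMul S A]
    [IsScalarTower S A M] [Fintype ι] {I : Ideal A} (hI : I ≤ (⊥ : Ideal A).jacobson)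
    (v : ι → M) (hv : Submodule.span S (Set.range ((I • ⊤ : Submodule A M).mkQ ∘ v)) = ⊤) :
    Function.Surjective (Fintype.linearCombination A v) := by
  refine LinearMap.surjective_of_surjective_comp_mkQ _ I hI ?_
  rw [← LinearMap.range_eq_top, LinearMap.range_comp, Fintype.range_linearCombination,
    Submodule.map_span, ← Set.range_comp, ← Submodule.restrictScalars_eq_top_iff S, eq_top_iff,
    ← hv]
  exact Submodule.span_le_restrictScalars S A _

theorem MonoidAlgebra.finrank_eq_natCard (R G : Type*) [CommRing R] [Nontrivial R] [Monoid G]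
    [Finite G] : Module.finrank R (MonoidAlgebra R G) = Nat.card G := by
  have := Fintype.ofFinite G
  rw [Module.finrank_eq_card_basis (MonoidAlgebra.basis G R), Nat.card_eq_fintype_card]

/-- Let `Λ = ℤ_p[[X]]`, let `G` be cyclic of order `p`, and let `M` be a finitely generated
`Λ[G]`-module that is free of finite rank `n` as a `Λ`-module.  If the coinvariant module
`M/JM` (where `J = (X, g - 1 : g ∈ G) ⊆ Λ[G]`) is a free `ℤ_p`-module of rank `r` with
`r * p = n`, then `M` is a free `Λ[G]`-module (of rank `r`). -/
theorem free_over_group_ring_of_coinvariants_free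
    (p n r : ℕ) [Fact p.Prime] (G : Type) [Group G] [IsCyclic G]
    (hG : Nat.card G = p)
    (M : Type) [AddCommGroup M]
    [Module (MonoidAlgebra (PowerSeries ℤ_[p]) G) M]
    [Module (PowerSeries ℤ_[p]) M] [Module ℤ_[p] M]
    [IsScalarTower (PowerSeries ℤ_[p]) (MonoidAlgebra (PowerSeries ℤ_[p]) G) M]
    [IsScalarTower ℤ_[p] (MonoidAlgebra (PowerSeries ℤ_[p]) G) M]
    (hfg : Module.Finite (MonoidAlgebra (PowerSeries ℤ_[p]) G) M)
    (hfree : Module.Free (PowerSeries ℤ_[p]) M)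
    (hn : Module.finrank (PowerSeries ℤ_[p]) M = n)
    (hQfree : Module.Free ℤ_[p]
      (M ⧸ (coinvariantsIdeal p G •
        (⊤ : Submodule (MonoidAlgebra (PowerSeries ℤ_[p]) G) M))))
    (hQrank : Module.finrank ℤ_[p]
      (M ⧸ (coinvariantsIdeal p G •
        (⊤ : Submodule (MonoidAlgebra (PowerSeries ℤ_[p]) G) M))) = r)
    (hrn : r * p = n) :
    Module.Free (MonoidAlgebra (PowerSeries ℤ_[p]) G) M ∧
      Module.finrank (MonoidAlgebra (PowerSeries ℤ_[p]) G) M = r := by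
  let : CommGroup G := IsCyclic.commGroup
  have : Finite G := Nat.finite_of_card_ne_zero (hG ▸ (Fact.out : p.Prime).ne_zero)
  have : Module.Finite ℤ_[p]⟦X⟧ M := .trans (MonoidAlgebra ℤ_[p]⟦X⟧ G) M
  obtain rfl | hr := Nat.eq_zero_or_pos r
  · have : Subsingleton M := (Module.finrank_zero_iff (R := ℤ_[p]⟦X⟧)).mp (by lia)
    exact ⟨inferInstance, Module.finrank_zero_of_subsingleton⟩
  set Q := M ⧸ (coinvariantsIdeal p G • (⊤ : Submodule (MonoidAlgebra ℤ_[p]⟦X⟧ G) M))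
  have : Module.Finite ℤ_[p] Q := Module.finite_of_finrank_pos (hQrank ▸ hr)
  let b := Module.finBasisOfFinrankEq ℤ_[p] Q hQrank
  let v := Function.surjInv (Submodule.mkQ_surjective _) ∘ b
  let f := Fintype.linearCombination (MonoidAlgebra ℤ_[p]⟦X⟧ G) v
  have hf_surj : Function.Surjective f := by
    refine Fintype.surjective_linearCombination_of_span_mkQ (S := ℤ_[p])
      (coinvariantsIdeal_le_jacobson_bot p G fun g => hG ▸ pow_card_eq_one') v ?_
    rw [← b.span_eq]
    congr 2
    exact funext fun i => Function.surjInv_eq _ (b i)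
  have hf_inj : Function.Injective f :=
    (f.restrictScalars ℤ_[p]⟦X⟧).injective_of_surjective_of_finrank_eq hf_surj <| by
      rw [Module.finrank_pi_fintype, MonoidAlgebra.finrank_eq_natCard, hG, hn, ← hrn]
      simp
  let e := LinearEquiv.ofBijective f ⟨hf_inj, hf_surj⟩
  exact ⟨.of_equiv e, by rw [← e.finrank_eq, Module.finrank_fin_fun]⟩
end

section
/- Let R be a commutative ring, 𝒢 a group, and τ ∈ 𝒢 an element such that the subgroup generated by τ is normal in 𝒢. In the group algebra R[𝒢], let I denote the left ideal generated by τ − 1. Then I is a two-sided ideal, and for every k ≥ 1 the k-th power of I (the R-submodule of R[𝒢] spanned by all products of k elements of I) equals the left ideal generated by (τ − 1)^k. -/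
/-! If `g⁻¹ τ g = τ ^ n`, then `(τ - 1) g = g (τ ^ n - 1)`, and `τ ^ n - 1` is a left multiple of
`τ - 1`; so the left ideal generated by `τ - 1` is two-sided, and for a two-sided principal left
ideal `(a) ^ k = (a ^ k)`. -/

theorem MonoidHom.map_zpow_sub_one_mem_span_sub_one {G A : Type*} [Group G] [Ring A]
    (f : G →* A) (g : G) (n : ℤ) : f (g ^ n) - 1 ∈ Ideal.span {f g - 1} := by
  have hmem : f g - 1 ∈ Ideal.span {f g - 1} := Ideal.mem_span_singleton_self _
  induction n using Int.induction_on with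
  | zero => simp
  | succ n ih =>
    have : f (g ^ (n + 1 : ℤ)) - 1 = f (g ^ (n : ℤ)) * (f g - 1) + (f (g ^ (n : ℤ)) - 1) := by
      rw [zpow_add_one, map_mul]; noncomm_ring
    rw [this]
    exact Ideal.add_mem _ (Ideal.mul_mem_left _ _ hmem) ih
  | pred n ih =>
    have : f (g ^ (-(n : ℤ) - 1)) - 1 =
        (f (g ^ (-(n : ℤ))) - 1) - f (g ^ (-(n : ℤ) - 1)) * (f g - 1) := by
      rw [mul_sub, ← map_mul, ← zpow_add_one, sub_add_cancel]; noncomm_ring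
    rw [this]
    exact Ideal.sub_mem _ ih (Ideal.mul_mem_left _ _ hmem)

theorem Ideal.isTwoSided_span_singleton_of_mul_mem {A : Type*} [Semiring A] {a : A}
    (h : ∀ b, a * b ∈ Ideal.span {a}) : (Ideal.span {a}).IsTwoSided := by
  refine ⟨fun b hx => ?_⟩
  obtain ⟨c, rfl⟩ := Ideal.mem_span_singleton'.mp hx
  rw [mul_assoc]
  exact Ideal.mul_mem_left _ c (h b)

theorem MonoidAlgebra.isTwoSided_span_of_sub_one (R : Type*) [CommRing R] {G : Type*} [Group G]
    {τ : G} (hτ : (Subgroup.zpowers τ).Normal) :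
    (Ideal.span {MonoidAlgebra.of R G τ - 1}).IsTwoSided := by
  refine Ideal.isTwoSided_span_singleton_of_mul_mem fun y => ?_
  induction y using MonoidAlgebra.induction_on with
  | of g =>
    obtain ⟨n, hn⟩ := hτ.conj_mem τ (Subgroup.mem_zpowers τ) g⁻¹
    have hτg : τ * g = g * τ ^ n := by
      rw [show τ ^ n = g⁻¹ * τ * g⁻¹⁻¹ from hn]; group
    have : (of R G τ - 1) * of R G g = of R G g * (of R G (τ ^ n) - 1) := by
      rw [sub_mul, mul_sub, one_mul, mul_one, ← map_mul, ← map_mul, hτg]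
    rw [this]
    exact Ideal.mul_mem_left _ _ ((of R G).map_zpow_sub_one_mem_span_sub_one τ n)
  | add x y hx hy => rw [mul_add]; exact Ideal.add_mem _ hx hy
  | smul r x hx => rw [mul_smul_comm]; exact Submodule.smul_of_tower_mem _ r hx

/-- Let `R` be a commutative ring, `𝒢` a group, and `τ ∈ 𝒢` an element such that the subgroup
generated by `τ` is normal in `𝒢`.  In the group algebra `R[𝒢]`, the left ideal `I`
generated by `τ - 1` is a two-sided ideal, and for every `k ≥ 1` the `k`-th power of `I`
(as an `R`-submodule of `R[𝒢]`, i.e. the `R`-span of products of `k` elements of `I`)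
equals the left ideal generated by `(τ - 1)^k`. -/
theorem pow_augmentation_ideal_of_normal_zpowers
    (R : Type) [CommRing R] (𝒢 : Type) [Group 𝒢] (τ : 𝒢)
    (hτ : (Subgroup.zpowers τ).Normal) :
    (∀ x ∈ Ideal.span {MonoidAlgebra.of R 𝒢 τ - 1},
        ∀ y : MonoidAlgebra R 𝒢, x * y ∈ Ideal.span {MonoidAlgebra.of R 𝒢 τ - 1}) ∧
    ∀ k : ℕ, 1 ≤ k →
      ((Ideal.span {MonoidAlgebra.of R 𝒢 τ - 1}).restrictScalars R) ^ k =
        (Ideal.span {(MonoidAlgebra.of R 𝒢 τ - 1) ^ k}).restrictScalars R := by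
  have := MonoidAlgebra.isTwoSided_span_of_sub_one R hτ
  refine ⟨fun x hx y => Ideal.mul_mem_right y _ hx, fun k hk => ?_⟩
  rw [← Submodule.restrictScalars_pow (by omega), Ideal.span_singleton_pow]
end

section
/- Let p be a prime and n ≥ 1. In ℤ_p[X], set ω_n^+(X) = X · ∏_{1 ≤ m ≤ n, m even} Φ_{p^m}(X+1) and ν_n^-(X) = ∏_{1 ≤ m ≤ n, m odd} Φ_{p^m}(X+1), where Φ_{p^m} denotes the p^m-th cyclotomic polynomial. Then there exist polynomials a, b ∈ ℤ_p[X] and a nonzero constant c ∈ ℤ_p such that c = a·ω_n^+ + b·ν_n^-; that is, ω_n^+(X) and ω_n^-(X)/X = ν_n^-(X) generate an ideal of ℤ_p[X] containing a nonzero constant. -/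
open Polynomial

/-- `ω_n^+(X) = X · ∏_{1 ≤ m ≤ n, m even} Φ_{p^m}(X+1)` in `ℤ_p[X]`. -/
noncomputable def omegaPlus (p n : ℕ) [Fact p.Prime] : Polynomial ℤ_[p] :=
  Polynomial.X *
    ∏ m ∈ (Finset.Icc 1 n).filter (fun m => Even m),
      (Polynomial.cyclotomic (p ^ m) ℤ_[p]).comp (Polynomial.X + 1)

/-- `ν_n^-(X) = ω_n^-(X)/X = ∏_{1 ≤ m ≤ n, m odd} Φ_{p^m}(X+1)` in `ℤ_p[X]`. -/
noncomputable def nuMinus (p n : ℕ) [Fact p.Prime] : Polynomial ℤ_[p] :=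
  ∏ m ∈ (Finset.Icc 1 n).filter (fun m => Odd m),
    (Polynomial.cyclotomic (p ^ m) ℤ_[p]).comp (Polynomial.X + 1)

/-- Distinct cyclotomic polynomials over `ℚ_[p]` are coprime. -/
lemma cyclotomic_isCoprime_qp (p : ℕ) [Fact p.Prime] {N M : ℕ} (h : N ≠ M) :
    IsCoprime (cyclotomic N ℚ_[p]) (cyclotomic M ℚ_[p]) := by
  have := (Polynomial.cyclotomic.isCoprime_rat h).map
    (Polynomial.mapRingHom (algebraMap ℚ ℚ_[p]))
  simpa [Polynomial.map_cyclotomic] using this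

/-- Compose-with-`X+1` as a ring hom preserves coprimality. -/
lemma isCoprime_comp_qp (p : ℕ) [Fact p.Prime] {f g : Polynomial ℚ_[p]}
    (h : IsCoprime f g) :
    IsCoprime (f.comp (Polynomial.X + 1)) (g.comp (Polynomial.X + 1)) := by
  have := h.map (Polynomial.eval₂RingHom Polynomial.C (Polynomial.X + 1))
  simpa [Polynomial.comp] using this

lemma isCoprime_X_comp (p : ℕ) [Fact p.Prime] {m : ℕ} (hm : 1 ≤ m) :
    IsCoprime (Polynomial.X : Polynomial ℚ_[p])
      ((cyclotomic (p ^ m) ℚ_[p]).comp (Polynomial.X + 1)) := by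
  rw [(Polynomial.prime_X (R := ℚ_[p])).irreducible.coprime_iff_not_dvd,
    Polynomial.X_dvd_iff, Polynomial.coeff_zero_eq_eval_zero]
  obtain ⟨k, rfl⟩ := Nat.exists_eq_add_of_le hm
  have hp : ((p : ℚ_[p])) ≠ 0 := by
    exact_mod_cast Nat.cast_ne_zero.mpr (Fact.out (p := p.Prime)).ne_zero
  simp only [Polynomial.eval_comp, Polynomial.eval_add, Polynomial.eval_X,
    Polynomial.eval_one, zero_add]
  rw [add_comm 1 k, Polynomial.eval_one_cyclotomic_prime_pow]
  exact hp

/-- For a prime `p` and `n ≥ 1`, there are polynomials `a, b ∈ ℤ_p[X]` and a nonzero constant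
`c ∈ ℤ_p` with `c = a·ω_n^+ + b·ν_n^-`; that is, `ω_n^+(X)` and `ω_n^-(X)/X = ν_n^-(X)`
generate an ideal of `ℤ_p[X]` containing a nonzero constant. -/
theorem omegaPlus_nuMinus_coprime_up_to_constant
    (p : ℕ) [Fact p.Prime] (n : ℕ) (hn : 1 ≤ n) :
    ∃ (a b : Polynomial ℤ_[p]) (c : ℤ_[p]), c ≠ 0 ∧
      Polynomial.C c = a * omegaPlus p n + b * nuMinus p n := by
  classical
  set φ : Polynomial ℤ_[p] →+* Polynomial ℚ_[p] :=
    Polynomial.mapRingHom (algebraMap ℤ_[p] ℚ_[p]) with hφ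
  -- images of the two polynomials
  have hF : φ (omegaPlus p n) =
      Polynomial.X * ∏ m ∈ (Finset.Icc 1 n).filter (fun m => Even m),
        (cyclotomic (p ^ m) ℚ_[p]).comp (Polynomial.X + 1) := by
    simp [omegaPlus, hφ, Polynomial.map_prod, Polynomial.map_comp, Polynomial.map_cyclotomic]
  have hG : φ (nuMinus p n) =
      ∏ m ∈ (Finset.Icc 1 n).filter (fun m => Odd m),
        (cyclotomic (p ^ m) ℚ_[p]).comp (Polynomial.X + 1) := by
    simp [nuMinus, hφ, Polynomial.map_prod, Polynomial.map_comp, Polynomial.map_cyclotomic]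
  have hp1 : 2 ≤ p := (Fact.out (p := p.Prime)).two_le
  -- coprimality over ℚ_[p]
  have hcop : IsCoprime (φ (omegaPlus p n)) (φ (nuMinus p n)) := by
    rw [hF, hG]
    apply IsCoprime.mul_left
    · apply IsCoprime.prod_right
      intro m hm
      simp only [Finset.mem_filter, Finset.mem_Icc] at hm
      exact isCoprime_X_comp p hm.1.1
    · apply IsCoprime.prod_left
      intro m hm
      apply IsCoprime.prod_right
      intro k hk
      simp only [Finset.mem_filter, Finset.mem_Icc] at hm hk
      have hmk : m ≠ k := by
        rintro rfl
        exact (Nat.not_odd_iff_even.mpr hm.2) hk.2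
      exact isCoprime_comp_qp p (cyclotomic_isCoprime_qp p (by
        exact fun h => hmk (Nat.pow_right_injective hp1 h)))
  obtain ⟨u, v, huv⟩ := hcop
  -- clear denominators
  obtain ⟨b₁, hb₁⟩ := IsLocalization.integerNormalization_map_to_map
    (nonZeroDivisors ℤ_[p]) u
  obtain ⟨b₂, hb₂⟩ := IsLocalization.integerNormalization_map_to_map
    (nonZeroDivisors ℤ_[p]) v
  set A := IsLocalization.integerNormalization (nonZeroDivisors ℤ_[p]) u
  set B := IsLocalization.integerNormalization (nonZeroDivisors ℤ_[p]) v
  refine ⟨Polynomial.C (b₂ : ℤ_[p]) * A, Polynomial.C (b₁ : ℤ_[p]) * B,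
    (b₁ : ℤ_[p]) * (b₂ : ℤ_[p]), ?_, ?_⟩
  · exact mul_ne_zero (nonZeroDivisors.coe_ne_zero b₁) (nonZeroDivisors.coe_ne_zero b₂)
  · have hinj : Function.Injective φ :=
      Polynomial.map_injective _ (IsFractionRing.injective ℤ_[p] ℚ_[p])
    apply hinj
    have hA : φ A = Polynomial.C ((b₁ : ℤ_[p]) : ℚ_[p]) * u := by
      rw [hφ]; rw [show (Polynomial.mapRingHom (algebraMap ℤ_[p] ℚ_[p])) A
        = A.map (algebraMap ℤ_[p] ℚ_[p]) from rfl, hb₁, Algebra.smul_def,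
        Polynomial.algebraMap_apply, PadicInt.algebraMap_apply]
    have hB : φ B = Polynomial.C ((b₂ : ℤ_[p]) : ℚ_[p]) * v := by
      rw [hφ]; rw [show (Polynomial.mapRingHom (algebraMap ℤ_[p] ℚ_[p])) B
        = B.map (algebraMap ℤ_[p] ℚ_[p]) from rfl, hb₂, Algebra.smul_def,
        Polynomial.algebraMap_apply, PadicInt.algebraMap_apply]
    have hφC : ∀ x : ℤ_[p], φ (Polynomial.C x) = Polynomial.C ((x : ℤ_[p]) : ℚ_[p]) := by
      intro x; simp [hφ, PadicInt.algebraMap_apply]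
    simp only [map_add, map_mul, hA, hB, hφC]
    push_cast [map_mul]
    linear_combination -
      (Polynomial.C ((b₁ : ℤ_[p]) : ℚ_[p]) * Polynomial.C ((b₂ : ℤ_[p]) : ℚ_[p])) * huv
end
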